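/- (Fact: encoders next to a selector) In every tiling of the plane by the constructed set B(T) of 29 Wang bars, the unit cell directly above the top pointer of each placed selector is the locator cell of a section of a placed encoder, and the unit cell directly below the bottom pointer of each placed selector is the locator cell of a section of a placed encoder; thus each selector picks out one section of the encoder above it and one section of the encoder below it. -/

import Mathlib

/-- A Wang tile: a quadruple (north, east, south, west) of colors (natural numbers). -/
abbrev WangTile : Type := ℕ × ℕ × ℕ × ℕ

def WangTile.north (t : WangTile) : ℕ := t.1
def WangTile.east  (t : WangTile) : ℕ := t.2.1
def WangTile.south (t : WangTile) : ℕ := t.2.2.1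
def WangTile.west  (t : WangTile) : ℕ := t.2.2.2

/-- `f : ℤ × ℤ → WangTile` is a tiling of the plane by (translated copies of) tiles
of `T`: adjacent edges carry the same color. -/
def IsWangTiling (T : Finset WangTile) (f : ℤ × ℤ → WangTile) : Prop :=
  (∀ p, f p ∈ T) ∧
  (∀ x y : ℤ, (f (x, y)).east = (f (x + 1, y)).west) ∧
  (∀ x y : ℤ, (f (x, y)).north = (f (x, y + 1)).south)

/-- The finite set `T` of Wang tiles tiles the plane. -/
def TilesPlane (T : Finset WangTile) : Prop := ∃ f, IsWangTiling T f

/-- A Wang bar: a list of top colors, a list of bottom colors (of the same positive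
length `l`), a left color and a right color. -/
abbrev WangBar : Type := List ℕ × List ℕ × ℕ × ℕ

def WangBar.top    (b : WangBar) : List ℕ := b.1
def WangBar.bottom (b : WangBar) : List ℕ := b.2.1
def WangBar.left   (b : WangBar) : ℕ := b.2.2.1
def WangBar.right  (b : WangBar) : ℕ := b.2.2.2

/-- The length of a Wang bar. -/
def WangBar.len (b : WangBar) : ℕ := b.1.length

/-- A genuine Wang bar has positive length and as many bottom colors as top colors. -/
def WangBar.IsValid (b : WangBar) : Prop := 0 < b.len ∧ b.top.length = b.bottom.length

/-- A tiling of the plane by translated copies of bars of `B`, recorded by the function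
`f` sending each unit cell to the bar covering it together with the index of the cell
inside that bar.  The conditions say that the cells of one placed bar are consecutive
cells of one row, that colors of horizontally adjacent bars match at their common
vertical unit segment, and that colors of vertically adjacent bars match at every
common horizontal unit segment. -/
def IsBarTiling (B : Finset WangBar) (f : ℤ × ℤ → WangBar × ℕ) : Prop :=
  (∀ p, (f p).1 ∈ B) ∧
  (∀ p, (f p).2 < (f p).1.len) ∧
  (∀ x y : ℤ, (f (x, y)).2 + 1 < (f (x, y)).1.len →
      f (x + 1, y) = ((f (x, y)).1, (f (x, y)).2 + 1)) ∧
  (∀ x y : ℤ, 0 < (f (x, y)).2 →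
      f (x - 1, y) = ((f (x, y)).1, (f (x, y)).2 - 1)) ∧
  (∀ x y : ℤ, (f (x, y)).2 + 1 = (f (x, y)).1.len →
      (f (x + 1, y)).2 = 0 ∧ (f (x, y)).1.right = (f (x + 1, y)).1.left) ∧
  (∀ x y : ℤ, (f (x, y)).1.top.getD (f (x, y)).2 0 =
      (f (x, y + 1)).1.bottom.getD (f (x, y + 1)).2 0)

/-- The finite set `B` of Wang bars tiles the plane. -/
def BarsTilePlane (B : Finset WangBar) : Prop := ∃ f, IsBarTiling B f

/-- The set of the (at most four) edge colors of a Wang tile. -/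
def WangTile.colors (t : WangTile) : Finset ℕ := {t.north, t.east, t.south, t.west}

/-- The set of distinct colors occurring on the edges of tiles of `T`. -/
def tileSetColors (T : Finset WangTile) : Finset ℕ := T.biUnion WangTile.colors

/-! ### The paper's construction of the set `B(T)` of 29 Wang bars
The construction uses the 20 new colors `a_1, …, a_8, b_1, …, b_8, x, y, z, 0`
together with six internal colors gluing the seven bars of the selector and the
internal colors `b_5, b_6, b_7, b_8` are among the `b`-colors. -/

def aCol (i : ℕ) : ℕ := i          -- the colors `a_1, …, a_8`
def bCol (i : ℕ) : ℕ := 8 + i      -- the colors `b_1, …, b_8`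
def xCol : ℕ := 17                 -- the color `x`
def yCol : ℕ := 18                 -- the color `y`
def zCol : ℕ := 19                 -- the color `z`
def oCol : ℕ := 0                  -- the color `0`
def sCol (i : ℕ) : ℕ := 19 + i     -- the six internal colors of the selector

/-- `n`: the number of tiles of `T`. -/
def nOf (T : Finset WangTile) : ℕ := T.card

/-- `m`: the number of distinct edge colors of `T`. -/
def mOf (T : Finset WangTile) : ℕ := (tileSetColors T).card

/-- The list of the `m` edge colors of `T`, in increasing order. -/
def colorList (T : Finset WangTile) : List ℕ := (tileSetColors T).sort (· ≤ ·)

/-- The unary index (position among the `m` colors of `T`) of an edge color. -/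
def colorIdx (T : Finset WangTile) (c : ℕ) : ℕ := (colorList T).idxOf c

/-- Top side of an arm of an encoder section: all `m` cells carry `a_5` except the
single cell at position `pos`, which carries `a_3`. -/
def armTop (m pos : ℕ) : List ℕ :=
  (List.range m).map fun i => if i = pos then aCol 3 else aCol 5

/-- Bottom side of an arm: all cells carry `a_6` except the cell at `pos` carrying `a_4`. -/
def armBot (m pos : ℕ) : List ℕ :=
  (List.range m).map fun i => if i = pos then aCol 4 else aCol 6

/-- Top side of the encoder section simulating the tile `t` (tilted by `π/4`):
left arm encoding the north color, the locator cell carrying `a_1`, and right arm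
encoding the east color. -/
def sectionTop (T : Finset WangTile) (t : WangTile) : List ℕ :=
  armTop (mOf T) (colorIdx T t.north) ++ [aCol 1] ++ armTop (mOf T) (colorIdx T t.east)

/-- Bottom side of the section simulating `t`: left arm encoding the west color,
the locator cell carrying `a_2`, and right arm encoding the south color. -/
def sectionBot (T : Finset WangTile) (t : WangTile) : List ℕ :=
  armBot (mOf T) (colorIdx T t.west) ++ [aCol 2] ++ armBot (mOf T) (colorIdx T t.south)

/-- (i) The encoder: one bar of length `n(2m+1)`, with one section of length `2m+1`
per tile of `T`, and left and right sides colored `z`. -/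
noncomputable def encoderBar (T : Finset WangTile) : WangBar :=
  ((T.toList.map (sectionTop T)).flatten, (T.toList.map (sectionBot T)).flatten, zCol, zCol)

/-- (ii) The seven bars of the selector, glued by six distinct internal colors. -/
def topPointer : WangBar := ([aCol 2], [sCol 1], oCol, oCol)
def selUpper2  : WangBar := ([sCol 1], [sCol 2], oCol, oCol)
def selUpper1  : WangBar := ([sCol 2], [sCol 3], xCol, yCol)
def selectorLong (T : Finset WangTile) : WangBar :=
  (List.replicate (mOf T) (aCol 7) ++ [sCol 3] ++ List.replicate (mOf T) (aCol 7),
   List.replicate (mOf T) (aCol 8) ++ [sCol 4] ++ List.replicate (mOf T) (aCol 8),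
   zCol, zCol)
def selLower1  : WangBar := ([sCol 4], [sCol 5], xCol, yCol)
def selLower2  : WangBar := ([sCol 5], [sCol 6], oCol, oCol)
def bottomPointer : WangBar := ([sCol 6], [aCol 1], oCol, oCol)

/-- The selector group. -/
def selectorBars (T : Finset WangTile) : Finset WangBar :=
  {topPointer, selUpper2, selUpper1, selectorLong T, selLower1, selLower2, bottomPointer}

/-- (iii) The aligner. -/
def alignerBar (T : Finset WangTile) : WangBar :=
  (List.replicate (2 * mOf T + 1) (aCol 5), List.replicate (2 * mOf T + 1) (aCol 6),
   zCol, zCol)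

/-- The length `(n-1)(2m+1) + m + 1` of the two long linker bars. -/
def linkLen (T : Finset WangTile) : ℕ := (nOf T - 1) * (2 * mOf T + 1) + mOf T + 1

/-- (iv) The linkers. -/
def linkA4B1 : WangBar := ([aCol 4], [bCol 1], oCol, oCol)
def linkB2A3 : WangBar := ([bCol 2], [aCol 3], oCol, oCol)
def longLinkA (T : Finset WangTile) : WangBar :=
  (bCol 1 :: List.replicate (linkLen T - 1) (bCol 3),
   List.replicate (linkLen T - 1) (bCol 4) ++ [bCol 2], yCol, xCol)
def longLinkB (T : Finset WangTile) : WangBar :=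
  (List.replicate (linkLen T - 1) (bCol 3) ++ [bCol 1],
   bCol 2 :: List.replicate (linkLen T - 1) (bCol 4), yCol, xCol)

def linkerBars (T : Finset WangTile) : Finset WangBar :=
  {linkA4B1, linkB2A3, longLinkA T, longLinkB T}

/-- (v) Group-1 fillers. -/
def group1Fillers : Finset WangBar :=
  { ([aCol 2], [bCol 3], oCol, oCol), ([aCol 4], [bCol 3], oCol, oCol),
    ([aCol 6], [bCol 3], oCol, oCol), ([aCol 8], [bCol 3], oCol, oCol),
    ([bCol 4], [aCol 1], oCol, oCol), ([bCol 4], [aCol 3], oCol, oCol),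
    ([bCol 4], [aCol 5], oCol, oCol), ([bCol 4], [aCol 7], oCol, oCol) }

/-- (vi) Group-2 fillers. -/
def group2Fillers : Finset WangBar :=
  { ([aCol 8], [bCol 5], oCol, oCol), ([bCol 5], [bCol 6], xCol, xCol),
    ([bCol 5], [bCol 6], yCol, yCol), ([bCol 6], [aCol 5], oCol, oCol),
    ([aCol 6], [bCol 7], oCol, oCol), ([bCol 7], [bCol 8], xCol, xCol),
    ([bCol 7], [bCol 8], yCol, yCol), ([bCol 8], [aCol 7], oCol, oCol) }

/-- The constructed set `B(T)` of 29 Wang bars. -/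
noncomputable def barsOf (T : Finset WangTile) : Finset WangBar :=
  {encoderBar T} ∪ selectorBars T ∪ {alignerBar T} ∪ linkerBars T ∪
    group1Fillers ∪ group2Fillers

/-!
The top pointer carries `a_2` on its top and the bottom pointer carries `a_1` on its bottom.
Among the bars of `B(T)` only the encoder has `a_2` among its bottom colors or `a_1` among its
top colors, and it has them only at the middle cells of its sections of length `2m+1`.
-/

namespace List

variable {α : Type*}

theorem getD_mem_or_eq_default (l : List α) (i : ℕ) (d : α) :
    l.getD i d ∈ l ∨ l.getD i d = d := by
  rcases lt_or_ge i l.length with h | h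
  · exact .inl (getD_eq_getElem l d h ▸ getElem_mem h)
  · exact .inr (getD_eq_default l d h)

theorem mem_of_getD_eq {l : List α} {i : ℕ} {c d : α} (hc : c ≠ d) (h : l.getD i d = c) :
    c ∈ l :=
  h ▸ (l.getD_mem_or_eq_default i d).resolve_right (h ▸ hc)

theorem eq_length_of_getD_append_singleton_append {A B : List α} {c d : α} {j : ℕ}
    (hc : c ≠ d) (hA : c ∉ A) (hB : c ∉ B) (h : (A ++ [c] ++ B).getD j d = c) :
    j = A.length := by
  rcases lt_trichotomy j A.length with hj | hj | hj
  · rw [append_assoc, getD_append _ _ _ _ hj] at h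
    exact absurd (mem_of_getD_eq hc h) hA
  · exact hj
  · rw [getD_append_right _ _ _ _ (by simp; omega)] at h
    exact absurd (mem_of_getD_eq hc h) hB

theorem mod_eq_of_getD_flatten {ls : List (List α)} {s k i : ℕ} {c d : α}
    (hc : c ≠ d) (hk : k < s) (hlen : ∀ l ∈ ls, l.length = s)
    (hloc : ∀ l ∈ ls, ∀ j, l.getD j d = c → j = k) (h : ls.flatten.getD i d = c) :
    i % s = k := by
  induction ls generalizing i with
  | nil => exact absurd (h.symm.trans (getD_nil ..)) hc
  | cons l ls ih =>
    have hl : l.length = s := hlen l mem_cons_self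
    rw [flatten_cons] at h
    rcases lt_or_ge i s with his | his
    · rw [getD_append _ _ _ _ (hl ▸ his)] at h
      rw [hloc l mem_cons_self i h, Nat.mod_eq_of_lt hk]
    · rw [getD_append_right _ _ _ _ (hl ▸ his), hl] at h
      rw [Nat.mod_eq_sub_mod his]
      exact ih (fun l hl => hlen l (mem_cons_of_mem _ hl))
        (fun l hl => hloc l (mem_cons_of_mem _ hl)) h

end List

section Encoder

variable (T : Finset WangTile)

theorem aCol_one_not_mem_armTop (m p : ℕ) : aCol 1 ∉ armTop m p := by
  simp only [armTop, List.mem_map, not_exists, not_and]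
  intro i _
  split <;> decide

theorem aCol_two_not_mem_armBot (m p : ℕ) : aCol 2 ∉ armBot m p := by
  simp only [armBot, List.mem_map, not_exists, not_and]
  intro i _
  split <;> decide

theorem sectionTop_length (t : WangTile) : (sectionTop T t).length = 2 * mOf T + 1 := by
  simp only [sectionTop, armTop, List.length_append, List.length_map, List.length_range,
    List.length_singleton]
  omega

theorem sectionBot_length (t : WangTile) : (sectionBot T t).length = 2 * mOf T + 1 := by
  simp only [sectionBot, armBot, List.length_append, List.length_map, List.length_range,
    List.length_singleton]
  omega

theorem eq_mOf_of_sectionTop_getD {t : WangTile} {j : ℕ}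
    (h : (sectionTop T t).getD j 0 = aCol 1) : j = mOf T := by
  simpa [armTop] using List.eq_length_of_getD_append_singleton_append (by decide)
    (aCol_one_not_mem_armTop _ _) (aCol_one_not_mem_armTop _ _) h

theorem eq_mOf_of_sectionBot_getD {t : WangTile} {j : ℕ}
    (h : (sectionBot T t).getD j 0 = aCol 2) : j = mOf T := by
  simpa [armBot] using List.eq_length_of_getD_append_singleton_append (by decide)
    (aCol_two_not_mem_armBot _ _) (aCol_two_not_mem_armBot _ _) h

theorem encoderBar_top_getD_eq_aCol_one {i : ℕ} (h : (encoderBar T).top.getD i 0 = aCol 1) :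
    i % (2 * mOf T + 1) = mOf T :=
  List.mod_eq_of_getD_flatten (by decide) (by omega)
    (List.forall_mem_map.2 fun t _ => sectionTop_length T t)
    (List.forall_mem_map.2 fun _ _ _ => eq_mOf_of_sectionTop_getD T) h

theorem encoderBar_bottom_getD_eq_aCol_two {i : ℕ}
    (h : (encoderBar T).bottom.getD i 0 = aCol 2) : i % (2 * mOf T + 1) = mOf T :=
  List.mod_eq_of_getD_flatten (by decide) (by omega)
    (List.forall_mem_map.2 fun t _ => sectionBot_length T t)
    (List.forall_mem_map.2 fun _ _ _ => eq_mOf_of_sectionBot_getD T) h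

theorem aCol_one_not_mem_top_and_aCol_two_not_mem_bottom {b : WangBar} (hb : b ∈ barsOf T)
    (hne : b ≠ encoderBar T) : aCol 1 ∉ b.top ∧ aCol 2 ∉ b.bottom := by
  simp only [barsOf, selectorBars, linkerBars, group1Fillers, group2Fillers,
    Finset.mem_union, Finset.mem_insert, Finset.mem_singleton] at hb
  rcases hb with ((((rfl | hb) | hb) | hb) | hb) | hb
  · exact absurd rfl hne
  all_goals
    rcases hb with rfl | rfl | rfl | rfl | rfl | rfl | rfl | rfl <;>
    simp [WangBar.top, WangBar.bottom, topPointer, selUpper2, selUpper1, selectorLong, selLower1,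
      selLower2, bottomPointer, alignerBar, linkA4B1, linkB2A3, longLinkA, longLinkB, aCol, bCol,
      sCol, List.mem_replicate]

/-- `c`, a bar together with a cell index, is a locator cell: the middle cell of a section of
the encoder. -/
def IsEncoderLocator (c : WangBar × ℕ) : Prop :=
  c.1 = encoderBar T ∧ c.2 % (2 * mOf T + 1) = mOf T

theorem isEncoderLocator_of_top_getD_eq_aCol_one {c : WangBar × ℕ} (hc : c.1 ∈ barsOf T)
    (h : c.1.top.getD c.2 0 = aCol 1) : IsEncoderLocator T c :=
  have he : c.1 = encoderBar T := by_contra fun hne =>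
    (aCol_one_not_mem_top_and_aCol_two_not_mem_bottom T hc hne).1
      (List.mem_of_getD_eq (by decide) h)
  ⟨he, encoderBar_top_getD_eq_aCol_one T (he ▸ h)⟩

theorem isEncoderLocator_of_bottom_getD_eq_aCol_two {c : WangBar × ℕ} (hc : c.1 ∈ barsOf T)
    (h : c.1.bottom.getD c.2 0 = aCol 2) : IsEncoderLocator T c :=
  have he : c.1 = encoderBar T := by_contra fun hne =>
    (aCol_one_not_mem_top_and_aCol_two_not_mem_bottom T hc hne).2
      (List.mem_of_getD_eq (by decide) h)
  ⟨he, encoderBar_bottom_getD_eq_aCol_two T (he ▸ h)⟩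

end Encoder

theorem encoders_next_to_selector_general (T : Finset WangTile)
    (f : ℤ × ℤ → WangBar × ℕ) (hf : IsBarTiling (barsOf T) f) (x y : ℤ) :
    ((f (x, y)).1 = topPointer →
      (f (x, y + 1)).1 = encoderBar T ∧
      (f (x, y + 1)).2 % (2 * mOf T + 1) = mOf T) ∧
    ((f (x, y)).1 = bottomPointer →
      (f (x, y - 1)).1 = encoderBar T ∧
      (f (x, y - 1)).2 % (2 * mOf T + 1) = mOf T) := by
  obtain ⟨hmem, hidx_lt, -, -, -, hvert⟩ := hf
  refine ⟨fun hp => ?_, fun hp => ?_⟩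
  · have hidx : (f (x, y)).2 = 0 := by
      simpa [hp, WangBar.len, topPointer] using hidx_lt (x, y)
    have hmatch := hvert x y
    rw [hp, hidx] at hmatch
    exact isEncoderLocator_of_bottom_getD_eq_aCol_two T (hmem _) hmatch.symm
  · have hidx : (f (x, y)).2 = 0 := by
      simpa [hp, WangBar.len, bottomPointer] using hidx_lt (x, y)
    have hmatch := hvert x (y - 1)
    rw [sub_add_cancel, hp, hidx] at hmatch
    exact isEncoderLocator_of_top_getD_eq_aCol_one T (hmem _) hmatch

/-- **Fact 2 (encoders next to a selector).**  In every tiling of the plane by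
`B(T)`, the cell directly above the top pointer of each placed selector is a
locator cell (cell of index `≡ m (mod 2m+1)`) of a placed encoder, and likewise
the cell directly below the bottom pointer of each placed selector is a locator
cell of a placed encoder: each selector picks one section of the encoder above it
and one section of the encoder below it. -/
theorem encoders_next_to_selector (T : Finset WangTile) (hT : T.Nonempty)
    (f : ℤ × ℤ → WangBar × ℕ) (hf : IsBarTiling (barsOf T) f) (x y : ℤ) :
    ((f (x, y)).1 = topPointer →
      (f (x, y + 1)).1 = encoderBar T ∧
      (f (x, y + 1)).2 % (2 * mOf T + 1) = mOf T) ∧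
    ((f (x, y)).1 = bottomPointer →
      (f (x, y - 1)).1 = encoderBar T ∧
      (f (x, y - 1)).2 % (2 * mOf T + 1) = mOf T) :=
  encoders_next_to_selector_general T f hf x y
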